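/- arXiv:2212.03341 — 3 statements merged into one kernel-verified Lean document; each statement's English description precedes it below -/
import Mathlib

section
/- If a sequence (p_n)_{n≥0} of non-negative reals with positive partial sums P_n has finite upper growth rate, i.e. limsup_{n→∞} n·p_n/P_n < ∞, then lim_{n→∞} P_{n-1}/P_n = 1. -/
open Filter Finset Topology

/-!
Since `P n = P (n - 1) + p n`, the ratio `P (n - 1) / P n` equals `1 - p n / P n`, and the
growth bound squeezes `p n / P n` between `0` and `C / n` for large `n`.
-/

theorem EReal.exists_eventually_lt_of_limsup_lt_top {α : Type*} {l : Filter α} {u : α → ℝ}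
    (h : limsup (fun x => (u x : EReal)) l < ⊤) : ∃ C : ℝ, ∀ᶠ x in l, u x < C := by
  obtain ⟨C, hC, -⟩ := EReal.lt_iff_exists_real_btwn.mp h
  exact ⟨C, (eventually_lt_of_limsup_lt hC).mono fun x hx => mod_cast hx⟩

theorem tendsto_zero_of_nonneg_of_natCast_mul_lt {a : ℕ → ℝ} (h0 : ∀ n, 0 ≤ a n) {C : ℝ}
    (hC : ∀ᶠ n : ℕ in atTop, n * a n < C) : Tendsto a atTop (𝓝 0) := by
  refine squeeze_zero' (.of_forall h0) ?_ (tendsto_const_div_atTop_nhds_zero_nat C)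
  filter_upwards [hC, eventually_gt_atTop 0] with n hn hn0
  rw [le_div_iff₀ (mod_cast hn0), mul_comm]
  exact hn.le

theorem partialSum_pred_div_eq_one_sub {p P : ℕ → ℝ}
    (hP : ∀ n, P n = ∑ k ∈ range (n + 1), p k) {n : ℕ} (hn : n ≠ 0) (hPn : P n ≠ 0) :
    P (n - 1) / P n = 1 - p n / P n := by
  obtain ⟨m, rfl⟩ := Nat.exists_eq_succ_of_ne_zero hn
  have hsucc : P (m + 1) = P m + p (m + 1) := by rw [hP, hP, sum_range_succ]
  rw [Nat.succ_sub_one, eq_sub_iff_add_eq, ← add_div, ← hsucc, div_self hPn]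

/-- Finite upper growth rate implies P_{n-1}/P_n → 1. -/
theorem ratio_tendsto_one (p : ℕ → ℝ) (hp : ∀ n, 0 ≤ p n)
    (P : ℕ → ℝ) (hP : ∀ n, P n = ∑ k ∈ Finset.range (n + 1), p k)
    (hPpos : ∀ n, 0 < P n)
    (hgrowth : Filter.limsup (fun n : ℕ => (((n : ℝ) * p n / P n : ℝ) : EReal)) Filter.atTop < ⊤) :
    Filter.Tendsto (fun n : ℕ => P (n - 1) / P n) Filter.atTop (nhds 1) := by
  obtain ⟨C, hC⟩ := EReal.exists_eventually_lt_of_limsup_lt_top hgrowth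
  have hratio : Tendsto (fun n => p n / P n) atTop (𝓝 0) :=
    tendsto_zero_of_nonneg_of_natCast_mul_lt (fun n => div_nonneg (hp n) (hPpos n).le)
      (hC.mono fun n hn => by rwa [mul_div_assoc] at hn)
  have hlim : Tendsto (fun n => 1 - p n / P n) atTop (𝓝 1) := by
    simpa using hratio.const_sub 1
  refine hlim.congr' ?_
  filter_upwards [eventually_ne_atTop 0] with n hn
  exact (partialSum_pred_div_eq_one_sub hP hn (hPpos n).ne').symm
end

section
/- Let (p_n) be a non-decreasing sequence of positive reals with partial sums P_n, and α ≥ 1. Then (n+1)/P_n^{2α} · Σ_{k=1}^n |P_{n-k}^α − P_{n-k-1}^α|^2 ≤ α^2 · ((n+1)/n) · (n p_n / P_n)^{2α} for all n ≥ 1. -/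
open Finset

private lemma rpow_mvt {a b α : ℝ} (hα : 1 ≤ α) (hb : 0 ≤ b) (hba : b ≤ a) :
    a ^ α - b ^ α ≤ α * a ^ (α - 1) * (a - b) := by
  have ha : 0 ≤ a := hb.trans hba
  have key : ∀ x ∈ Set.Icc (0:ℝ) a, HasDerivWithinAt (fun x : ℝ => x ^ α)
      ((fun x : ℝ => α * x ^ (α - 1)) x) (Set.Icc 0 a) x := by
    intro x _
    have := Real.hasDerivAt_rpow_const (x := x) (p := α) (Or.inr hα)
    simpa [mul_comm] using this.hasDerivWithinAt
  have bound : ∀ x ∈ Set.Icc (0:ℝ) a, ‖(fun x : ℝ => α * x ^ (α - 1)) x‖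
      ≤ α * a ^ (α - 1) := by
    intro x hx
    rw [Real.norm_eq_abs, abs_mul, abs_of_nonneg (by linarith : (0:ℝ) ≤ α),
      abs_of_nonneg (Real.rpow_nonneg hx.1 _)]
    exact mul_le_mul_of_nonneg_left
      (Real.rpow_le_rpow hx.1 hx.2 (by linarith)) (by linarith)
  have h := (convex_Icc (0:ℝ) a).norm_image_sub_le_of_norm_hasDerivWithin_le
    key bound (⟨hb, hba⟩ : b ∈ Set.Icc (0:ℝ) a) (⟨ha, le_rfl⟩ : a ∈ Set.Icc (0:ℝ) a)
  rw [Real.norm_eq_abs, Real.norm_eq_abs] at h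
  calc a ^ α - b ^ α ≤ |a ^ α - b ^ α| := le_abs_self _
    _ ≤ α * a ^ (α - 1) * |a - b| := h
    _ = α * a ^ (α - 1) * (a - b) := by rw [abs_of_nonneg (by linarith)]

/-- With P n = p_0 + ⋯ + p_{n-1} (so P 0 = 0 plays the role of P_{-1};
the paper's P_n is P (n+1)), for non-decreasing positive p and α ≥ 1,
(n+1)/P_n^{2α} · Σ_{k=1}^n |P_{n-k}^α − P_{n-k-1}^α|² ≤ α²((n+1)/n)(n p_n/P_n)^{2α}. -/
theorem norm_bound_T (p : ℕ → ℝ) (hp : ∀ n, 0 < p n) (hmono : Monotone p)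
    (P : ℕ → ℝ) (hP : ∀ n, P n = ∑ k ∈ Finset.range n, p k)
    (α : ℝ) (hα : 1 ≤ α) (n : ℕ) (hn : 1 ≤ n) :
    ((n : ℝ) + 1) / P (n + 1) ^ (2 * α) *
        ∑ k ∈ Finset.Icc 1 n, |P (n - k + 1) ^ α - P (n - k) ^ α| ^ 2 ≤
      α ^ 2 * (((n : ℝ) + 1) / n) * ((n : ℝ) * p n / P (n + 1)) ^ (2 * α) := by
  have hn' : (0:ℝ) < n := by exact_mod_cast hn
  have hPnonneg : ∀ m, 0 ≤ P m := by
    intro m; rw [hP]; exact Finset.sum_nonneg fun i _ => (hp i).le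
  have hPstep : ∀ m, P (m+1) = P m + p m := by
    intro m; rw [hP, hP, Finset.sum_range_succ]
  have hPmono : Monotone P := by
    intro a b hab; rw [hP, hP]
    exact Finset.sum_le_sum_of_subset_of_nonneg (Finset.range_subset_range.2 hab)
      (fun i _ _ => (hp i).le)
  set Q := P (n+1) with hQ
  have hQpos : 0 < Q := by
    rw [hQ, hP]
    exact Finset.sum_pos (fun i _ => hp i) ⟨0, by simp⟩
  set X := (n:ℝ) * p n with hX
  have hXpos : 0 < X := mul_pos hn' (hp n)
  set B := α * X ^ (α - 1) * p n with hB
  have hterm : ∀ k ∈ Finset.Icc 1 n,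
      |P (n - k + 1) ^ α - P (n - k) ^ α| ^ 2 ≤ B ^ 2 := by
    intro k hk
    obtain ⟨hk1, hkn⟩ := Finset.mem_Icc.1 hk
    set j := n - k with hj
    have hjn : j + 1 ≤ n := by omega
    have hple : P (j+1) ≤ X := by
      rw [hP, hX]
      calc ∑ i ∈ Finset.range (j+1), p i ≤ ∑ i ∈ Finset.range (j+1), p n :=
          Finset.sum_le_sum fun i hi => hmono (by
            have := Finset.mem_range.1 hi; omega)
        _ = ((j:ℝ)+1) * p n := by
            rw [Finset.sum_const, Finset.card_range, nsmul_eq_mul]; push_cast; ring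
        _ ≤ (n:ℝ) * p n := by
            apply mul_le_mul_of_nonneg_right _ (hp n).le
            exact_mod_cast hjn
    have hmvt : P (j+1) ^ α - P j ^ α ≤ α * P (j+1) ^ (α-1) * (P (j+1) - P j) :=
      rpow_mvt hα (hPnonneg j) (hPmono (Nat.le_succ j))
    have habs : |P (j+1) ^ α - P j ^ α| = P (j+1) ^ α - P j ^ α := by
      rw [abs_of_nonneg]
      exact sub_nonneg.2 (Real.rpow_le_rpow (hPnonneg j) (hPmono (Nat.le_succ j))
        (by linarith))
    have hdiff : P (j+1) - P j = p j := by rw [hPstep]; ring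
    have hle : |P (j+1) ^ α - P j ^ α| ≤ B := by
      rw [habs, hB]
      calc P (j+1) ^ α - P j ^ α ≤ α * P (j+1) ^ (α-1) * p j := by
            rw [← hdiff]; exact hmvt
        _ ≤ α * X ^ (α-1) * p n := by
            have h1 : P (j+1) ^ (α-1) ≤ X ^ (α-1) :=
              Real.rpow_le_rpow (hPnonneg _) hple (by linarith)
            have h2 : p j ≤ p n := hmono (by omega)
            have hα0 : (0:ℝ) ≤ α := by linarith
            exact mul_le_mul (mul_le_mul_of_nonneg_left h1 hα0) h2 (hp j).le
              (mul_nonneg hα0 (Real.rpow_nonneg hXpos.le _))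
    exact pow_le_pow_left₀ (abs_nonneg _) hle 2
  have hsum : ∑ k ∈ Finset.Icc 1 n, |P (n - k + 1) ^ α - P (n - k) ^ α| ^ 2
      ≤ (n:ℝ) * B ^ 2 := by
    calc ∑ k ∈ Finset.Icc 1 n, |P (n - k + 1) ^ α - P (n - k) ^ α| ^ 2
        ≤ ∑ _k ∈ Finset.Icc 1 n, B ^ 2 := Finset.sum_le_sum hterm
      _ = (n:ℝ) * B ^ 2 := by
          rw [Finset.sum_const, Nat.card_Icc, nsmul_eq_mul]
          norm_num
  have hQr : 0 < Q ^ (2*α) := Real.rpow_pos_of_pos hQpos _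
  have hfac : 0 ≤ ((n:ℝ)+1) / Q ^ (2*α) := by positivity
  have key : ((n:ℝ)+1) / Q ^ (2*α) * ((n:ℝ) * B ^ 2)
      = α ^ 2 * (((n:ℝ)+1) / n) * (X / Q) ^ (2*α) := by
    have hdivr : (X / Q) ^ (2*α) = X ^ (2*α) / Q ^ (2*α) :=
      Real.div_rpow hXpos.le hQpos.le _
    have hX2 : X ^ (2*α) = (X ^ (α-1)) ^ 2 * X ^ 2 := by
      have h3 : (X ^ (α-1)) ^ 2 = X ^ (2*α-2) := by
        rw [← Real.rpow_natCast (X ^ (α-1)) 2, ← Real.rpow_mul hXpos.le]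
        norm_num
        ring_nf
      have h4 : (X:ℝ) ^ 2 = X ^ (2:ℝ) := by
        rw [← Real.rpow_natCast X 2]; norm_num
      rw [h3, h4, ← Real.rpow_add hXpos]
      ring_nf
    rw [hdivr, hX2, hB, hX]
    field_simp
  calc ((n:ℝ) + 1) / Q ^ (2 * α) *
        ∑ k ∈ Finset.Icc 1 n, |P (n - k + 1) ^ α - P (n - k) ^ α| ^ 2
      ≤ ((n:ℝ)+1) / Q ^ (2*α) * ((n:ℝ) * B ^ 2) :=
        mul_le_mul_of_nonneg_left hsum hfac
    _ = α ^ 2 * (((n:ℝ)+1) / n) * (X / Q) ^ (2*α) := key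
end

section
/- Let (p_n) be non-decreasing positive with P_n = Σ_{k=0}^n p_k, α ≥ 1, and k ≤ n. Then Σ_{j=1}^k ((1 − (P_{n-j}/P_n)^α)² ≤ α² (p_n/P_n)² · Σ_{j=1}^k j² ≤ α² (k³/n²) (n p_n/P_n)². -/
/-!
By Bernoulli's inequality `x ^ α ≥ 1 + α (x - 1)` for `x ≥ 0`, `α ≥ 1`, so for
`x = P_{n-j} / P_n` we get `0 ≤ 1 - x ^ α ≤ α (P_n - P_{n-j}) / P_n`. Since `p` is
non-decreasing, each of the `j` terms of `P_n - P_{n-j}` is at most `p_n`, so the `j`-th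
summand is at most `α² (p_n / P_n)² j²`. Finally `∑_{j=1}^k j² ≤ k · k² = k³`.
-/

open Finset

theorem one_sub_rpow_le_mul_one_sub {x α : ℝ} (hx : 0 ≤ x) (hα : 1 ≤ α) :
    1 - x ^ α ≤ α * (1 - x) := by
  have h := one_add_mul_self_le_rpow_one_add (s := x - 1) (by linarith) hα
  rw [add_sub_cancel] at h
  linarith

theorem sq_one_sub_rpow_div_le {a b c α : ℝ} (ha : 0 ≤ a) (hab : a ≤ b) (hb : 0 < b)
    (hbc : b - a ≤ c) (hα : 1 ≤ α) : (1 - (a / b) ^ α) ^ 2 ≤ α ^ 2 * (c / b) ^ 2 := by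
  have hx0 : 0 ≤ a / b := div_nonneg ha hb.le
  have hx1 : a / b ≤ 1 := (div_le_one hb).mpr hab
  have h_nonneg : 0 ≤ 1 - (a / b) ^ α := sub_nonneg.mpr (Real.rpow_le_one hx0 hx1 (by linarith))
  have h_le : 1 - (a / b) ^ α ≤ α * (c / b) :=
    calc 1 - (a / b) ^ α ≤ α * (1 - a / b) := one_sub_rpow_le_mul_one_sub hx0 hα
      _ = α * ((b - a) / b) := by rw [sub_div, div_self hb.ne']
      _ ≤ α * (c / b) := by gcongr
  calc (1 - (a / b) ^ α) ^ 2 ≤ (α * (c / b)) ^ 2 := pow_le_pow_left₀ h_nonneg h_le 2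
    _ = α ^ 2 * (c / b) ^ 2 := mul_pow _ _ _

theorem sum_range_succ_sub_sum_range_le_of_monotone {f : ℕ → ℝ} (hf : Monotone f) {j n : ℕ}
    (hjn : j ≤ n) :
    ∑ i ∈ range (n + 1), f i - ∑ i ∈ range (n - j + 1), f i ≤ j * f n := by
  rw [← sum_Ico_eq_sub _ (by omega : n - j + 1 ≤ n + 1)]
  calc ∑ i ∈ Ico (n - j + 1) (n + 1), f i ≤ #(Ico (n - j + 1) (n + 1)) • f n :=
        sum_le_card_nsmul _ _ _ fun i hi => hf (by simp at hi; omega)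
    _ = j * f n := by rw [Nat.card_Ico, nsmul_eq_mul]; congr 2; omega

theorem sum_Icc_one_sq_le_cube (k : ℕ) : ∑ j ∈ Icc 1 k, (j : ℝ) ^ 2 ≤ (k : ℝ) ^ 3 :=
  calc ∑ j ∈ Icc 1 k, (j : ℝ) ^ 2 ≤ #(Icc 1 k) • (k : ℝ) ^ 2 :=
        sum_le_card_nsmul _ _ _ fun j hj => by gcongr; exact_mod_cast (mem_Icc.mp hj).2
    _ = (k : ℝ) ^ 3 := by simp [pow_succ']

/-- With P n = p_0 + ⋯ + p_n, non-decreasing positive p, α ≥ 1 and 1 ≤ k ≤ n: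
Σ_{j=1}^k (1 − (P_{n-j}/P_n)^α)² ≤ α²(p_n/P_n)² Σ_{j=1}^k j²
  ≤ α²(k³/n²)(n p_n/P_n)². -/
theorem coeff_sum_bound (p : ℕ → ℝ) (hp : ∀ n, 0 < p n) (hmono : Monotone p)
    (P : ℕ → ℝ) (hP : ∀ n, P n = ∑ k ∈ Finset.range (n + 1), p k)
    (α : ℝ) (hα : 1 ≤ α) (k n : ℕ) (hk : 1 ≤ k) (hkn : k ≤ n) :
    (∑ j ∈ Finset.Icc 1 k, (1 - (P (n - j) / P n) ^ α) ^ 2 ≤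
        α ^ 2 * (p n / P n) ^ 2 * ∑ j ∈ Finset.Icc 1 k, (j : ℝ) ^ 2) ∧
      α ^ 2 * (p n / P n) ^ 2 * ∑ j ∈ Finset.Icc 1 k, (j : ℝ) ^ 2 ≤
        α ^ 2 * ((k : ℝ) ^ 3 / (n : ℝ) ^ 2) * ((n : ℝ) * p n / P n) ^ 2 := by
  have hP_pos (m : ℕ) : 0 < P m := hP m ▸ sum_pos (fun i _ => hp i) nonempty_range_add_one
  have hP_mono : Monotone P := fun a b hab => by
    rw [hP, hP]
    exact sum_le_sum_of_subset_of_nonneg (range_subset_range.mpr (by omega))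
      fun i _ _ => (hp i).le
  have h_term (j : ℕ) (hj : j ∈ Icc 1 k) :
      (1 - (P (n - j) / P n) ^ α) ^ 2 ≤ α ^ 2 * (p n / P n) ^ 2 * (j : ℝ) ^ 2 := by
    have h_gap : P n - P (n - j) ≤ j * p n := by
      rw [hP, hP]
      exact sum_range_succ_sub_sum_range_le_of_monotone hmono ((mem_Icc.mp hj).2.trans hkn)
    exact (sq_one_sub_rpow_div_le (hP_pos _).le (hP_mono (Nat.sub_le n j)) (hP_pos n) h_gap
      hα).trans_eq (by ring)
  have hn : (n : ℝ) ≠ 0 := by norm_cast; omega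
  refine ⟨(sum_le_sum h_term).trans_eq (mul_sum _ _ _).symm, ?_⟩
  calc α ^ 2 * (p n / P n) ^ 2 * ∑ j ∈ Icc 1 k, (j : ℝ) ^ 2
        ≤ α ^ 2 * (p n / P n) ^ 2 * k ^ 3 := by gcongr; exact sum_Icc_one_sq_le_cube k
    _ = α ^ 2 * ((k : ℝ) ^ 3 / (n : ℝ) ^ 2) * ((n : ℝ) * p n / P n) ^ 2 := by field_simp
end
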